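/- Let E, E♯, F be injective limits of sequences of Banach spaces {E_j}, {E♯_k}, {F_k} with compact inclusion maps (DFS spaces), with E ↪ E♯₀ continuously, and let F♯ be a Hausdorff topological vector space. If a map of pairs T: (E♯, E) → (F♯, F) satisfies property (H), then the continuous linear map T: E → F has closed range. -/

import Mathlib

/-!
Closedness in the inductive limit `F` is tested on each Banach step `F_k`. There the range of
`TE` becomes `A = {y | S y ∈ range Φ₀}`, where `S = jF ∘ ι_k` and `Φᵢ = T ∘ ι♯ᵢ`, and property (H)
gives `A = {y | S y ∈ range Φ₁}`. With `Q = E♯₁ ⧸ ker Φ₁` and `Ψ : Q → F♯` the injective map induced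
by `Φ₁`, the fibre product `{(y, q) | S y = Ψ q}` is a Banach space projecting onto `A`. By the
open mapping theorem each of its points `(y, q)` lifts to `x ∈ E♯₀` with `q = [ℓ x]` and
`‖x‖ ≲ ‖(y, q)‖`; compactness of the linking map `ℓ` and injectivity of `Ψ` then give
`‖q‖ ≤ c ‖y‖`. So the projection is antilipschitz and its range `A` is closed.
-/

/- A DFS space: `E` is the injective limit of a sequence of Banach spaces `EJ j`
with injective compact linking maps; `E` carries the inductive-limit topology
(expressed by the universal property below) and is the union of the steps. -/
def IsDFSLimit (E : Type) [AddCommGroup E] [Module ℝ E] [TopologicalSpace E]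
    (EJ : ℕ → Type) [∀ j, NormedAddCommGroup (EJ j)] [∀ j, NormedSpace ℝ (EJ j)]
    [∀ j, CompleteSpace (EJ j)]
    (link : ∀ j, EJ j →L[ℝ] EJ (j + 1)) (incl : ∀ j, EJ j →L[ℝ] E) : Prop :=
  (∀ j, Function.Injective (link j)) ∧
  (∀ j, IsCompactOperator (link j)) ∧
  (∀ j, Function.Injective (incl j)) ∧
  (∀ j, ∀ x, incl (j + 1) (link j x) = incl j x) ∧
  (∀ x : E, ∃ j y, incl j y = x) ∧
  (∀ (X : Type) [AddCommGroup X] [Module ℝ X] [TopologicalSpace X],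
    ∀ f : E →ₗ[ℝ] X, (∀ j, Continuous (f ∘ incl j)) → Continuous f)

open Function Metric Set

section FiberProduct

variable {R Y X Z : Type*} [Semiring R]
  [AddCommMonoid Y] [Module R Y] [TopologicalSpace Y]
  [AddCommMonoid X] [Module R X] [TopologicalSpace X]
  [AddCommMonoid Z] [Module R Z] [TopologicalSpace Z]

def fiberProd (S : Y →L[R] Z) (Φ : X →L[R] Z) : Submodule R (Y × X) :=
  LinearMap.eqLocus (S ∘L ContinuousLinearMap.fst R Y X : Y × X →ₗ[R] Z)
    (Φ ∘L ContinuousLinearMap.snd R Y X)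

theorem mem_fiberProd {S : Y →L[R] Z} {Φ : X →L[R] Z} {p : Y × X} :
    p ∈ fiberProd S Φ ↔ S p.1 = Φ p.2 :=
  Iff.rfl

theorem isClosed_fiberProd [T2Space Z] (S : Y →L[R] Z) (Φ : X →L[R] Z) :
    IsClosed (fiberProd S Φ : Set (Y × X)) :=
  isClosed_eq (S.continuous.comp continuous_fst) (Φ.continuous.comp continuous_snd)

end FiberProduct

section ClosedRange

variable {Y X Q Z : Type*}
  [NormedAddCommGroup Y] [NormedSpace ℝ Y]
  [NormedAddCommGroup X] [NormedSpace ℝ X]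
  [NormedAddCommGroup Q] [NormedSpace ℝ Q]
  [AddCommGroup Z] [Module ℝ Z] [TopologicalSpace Z] [T2Space Z]

theorem exists_lift_norm_le [CompleteSpace Y] [CompleteSpace X] [CompleteSpace Q]
    (S : Y →L[ℝ] Z) {Ψ : Q →L[ℝ] Z} (hΨ : Injective Ψ) (ℓ : X →L[ℝ] Q)
    (hS : ∀ y, S y ∈ range Ψ → S y ∈ range (Ψ ∘L ℓ)) :
    ∃ C, ∀ y q, S y = Ψ q → ∃ x, ℓ x = q ∧ ‖x‖ ≤ C * ‖(y, q)‖ := by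
  have := (isClosed_fiberProd S (Ψ ∘L ℓ)).completeSpace_coe
  have := (isClosed_fiberProd S Ψ).completeSpace_coe
  let μ : fiberProd S (Ψ ∘L ℓ) →L[ℝ] fiberProd S Ψ :=
    (((ContinuousLinearMap.id ℝ Y).prodMap ℓ) ∘L (fiberProd S (Ψ ∘L ℓ)).subtypeL).codRestrict
      _ fun p => p.2
  have hμ : Surjective μ := by
    rintro ⟨⟨y, q⟩, hyq⟩
    obtain ⟨x, hx⟩ := hS y ⟨q, hyq.symm⟩
    refine ⟨⟨(y, x), hx.symm⟩, Subtype.ext (Prod.ext rfl (hΨ ?_))⟩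
    exact hx.trans (mem_fiberProd.1 hyq)
  obtain ⟨C, -, hC⟩ := μ.exists_preimage_norm_le hμ
  refine ⟨C, fun y q hyq => ?_⟩
  obtain ⟨⟨⟨y', x⟩, _⟩, hx, hxC⟩ := hC ⟨(y, q), hyq⟩
  exact ⟨x, congrArg (fun p : fiberProd S Ψ => (p : Y × Q).2) hx, (norm_snd_le _).trans hxC⟩

theorem exists_pos_le_norm_of_norm_eq_one (S : Y →L[ℝ] Z) {Ψ : Q →L[ℝ] Z} (hΨ : Injective Ψ)
    {ℓ : X →L[ℝ] Q} (hℓ : IsCompactOperator ℓ) {C : ℝ}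
    (hC : ∀ y q, S y = Ψ q → ∃ x, ℓ x = q ∧ ‖x‖ ≤ C * ‖(y, q)‖) :
    ∃ ε > 0, ∀ y q, S y = Ψ q → ‖q‖ = 1 → ε ≤ ‖y‖ := by
  obtain ⟨K, hK, hℓK⟩ := hℓ.image_closedBall_subset_compact C
  -- `Ψ` keeps the compact set `K ∩ sphere 0 1` away from `0 = S 0`, hence from `S y` for small `y`.
  have hL : IsCompact (Ψ '' (K ∩ sphere 0 1)) :=
    (hK.inter_right isClosed_sphere).image Ψ.continuous
  have h0 : (0 : Y) ∈ S ⁻¹' (Ψ '' (K ∩ sphere 0 1))ᶜ := by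
    rintro ⟨q, ⟨-, hq⟩, hΨq⟩
    rw [map_zero, ← map_zero Ψ] at hΨq
    simp [hΨ hΨq] at hq
  obtain ⟨δ, hδ, hball⟩ :=
    Metric.isOpen_iff.1 (hL.isClosed.isOpen_compl.preimage S.continuous) 0 h0
  refine ⟨min δ 1, lt_min hδ one_pos, fun y q hyq hq => le_of_not_gt fun hy => ?_⟩
  obtain ⟨x, rfl, hx⟩ := hC y q hyq
  have hxC : ‖x‖ ≤ C := by
    rwa [Prod.norm_mk, hq, max_eq_right (hy.le.trans (min_le_right _ _)), mul_one] at hx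
  refine hball (mem_ball_zero_iff.2 (hy.trans_le (min_le_left _ _))) ⟨ℓ x, ⟨?_, ?_⟩, hyq.symm⟩
  · exact hℓK ⟨x, mem_closedBall_zero_iff.2 hxC, rfl⟩
  · exact mem_sphere_zero_iff_norm.2 hq

theorem exists_norm_le_mul_norm_of_isCompactOperator (S : Y →L[ℝ] Z) {Ψ : Q →L[ℝ] Z}
    (hΨ : Injective Ψ) {ℓ : X →L[ℝ] Q} (hℓ : IsCompactOperator ℓ) {C : ℝ}
    (hC : ∀ y q, S y = Ψ q → ∃ x, ℓ x = q ∧ ‖x‖ ≤ C * ‖(y, q)‖) :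
    ∃ c : NNReal, ∀ y q, S y = Ψ q → ‖q‖ ≤ c * ‖y‖ := by
  obtain ⟨ε, hε, hεy⟩ := exists_pos_le_norm_of_norm_eq_one S hΨ hℓ hC
  refine ⟨ε⁻¹.toNNReal, fun y q hyq => ?_⟩
  rw [Real.coe_toNNReal _ (inv_nonneg.2 hε.le)]
  rcases eq_or_ne q 0 with rfl | hq
  · simpa using mul_nonneg (inv_nonneg.2 hε.le) (norm_nonneg y)
  have := hεy (‖q‖⁻¹ • y) (‖q‖⁻¹ • q) (by simp only [map_smul, hyq]) (norm_smul_inv_norm hq)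
  rw [norm_smul, norm_inv, norm_norm, le_inv_mul_iff₀ (norm_pos_iff.2 hq)] at this
  rw [le_inv_mul_iff₀ hε]
  linarith

theorem isClosed_setOf_mem_range_of_injective [CompleteSpace Y] [CompleteSpace X]
    [CompleteSpace Q] (S : Y →L[ℝ] Z) {Ψ : Q →L[ℝ] Z} (hΨ : Injective Ψ) {ℓ : X →L[ℝ] Q}
    (hℓ : IsCompactOperator ℓ) (hS : ∀ y, S y ∈ range Ψ → S y ∈ range (Ψ ∘L ℓ)) :
    IsClosed {y | S y ∈ range Ψ} := by
  obtain ⟨C, hC⟩ := exists_lift_norm_le S hΨ ℓ hS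
  obtain ⟨c, hc⟩ := exists_norm_le_mul_norm_of_isCompactOperator S hΨ hℓ hC
  have := (isClosed_fiberProd S Ψ).completeSpace_coe
  let π : fiberProd S Ψ →L[ℝ] Y := ContinuousLinearMap.fst ℝ Y Q ∘L (fiberProd S Ψ).subtypeL
  have hπ : AntilipschitzWith (1 + c) π := by
    refine AddMonoidHomClass.antilipschitz_of_bound π fun ⟨⟨y, q⟩, hyq⟩ => ?_
    calc ‖(y, q)‖ ≤ ‖y‖ + ‖q‖ := max_le_add_of_nonneg (norm_nonneg _) (norm_nonneg _)
      _ ≤ ‖y‖ + c * ‖y‖ := by gcongr; exact hc y q hyq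
      _ = (1 + c : NNReal) * ‖y‖ := by push_cast; ring
  convert hπ.isClosed_range π.uniformContinuous using 1
  ext y
  constructor
  · rintro ⟨q, hq⟩
    exact ⟨⟨(y, q), hq.symm⟩, rfl⟩
  · rintro ⟨⟨⟨y, q⟩, hyq⟩, rfl⟩
    exact ⟨q, hyq.symm⟩

end ClosedRange

theorem isClosed_setOf_mem_range_comp_of_isCompactOperator {Y X₀ X₁ Z : Type*}
    [NormedAddCommGroup Y] [NormedSpace ℝ Y] [CompleteSpace Y]
    [NormedAddCommGroup X₀] [NormedSpace ℝ X₀] [CompleteSpace X₀]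
    [NormedAddCommGroup X₁] [NormedSpace ℝ X₁] [CompleteSpace X₁]
    [AddCommGroup Z] [Module ℝ Z] [TopologicalSpace Z] [T2Space Z]
    (S : Y →L[ℝ] Z) (Φ : X₁ →L[ℝ] Z) {ℓ : X₀ →L[ℝ] X₁} (hℓ : IsCompactOperator ℓ)
    (hS : ∀ y, S y ∈ range Φ → S y ∈ range (Φ ∘L ℓ)) :
    IsClosed {y | S y ∈ range (Φ ∘L ℓ)} := by
  let N := LinearMap.ker (Φ : X₁ →ₗ[ℝ] Z)
  have : IsClosed (N : Set X₁) := Φ.isClosed_ker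
  let Ψ : X₁ ⧸ N →L[ℝ] Z := N.liftQL Φ le_rfl
  have hΨ : Injective Ψ := LinearMap.ker_eq_bot.1 (N.ker_liftQ_eq_bot' _ rfl)
  have hrange : range Ψ = range Φ := by
    ext z
    refine ⟨?_, fun ⟨x, hx⟩ => ⟨N.mkQ x, hx⟩⟩
    rintro ⟨q, rfl⟩
    obtain ⟨x, rfl⟩ := N.mkQ_surjective q
    exact ⟨x, rfl⟩
  have hcomp : Ψ ∘L (N.mkQL ∘L ℓ) = Φ ∘L ℓ := rfl
  have hclosed := isClosed_setOf_mem_range_of_injective S hΨ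
    (hℓ.continuous_comp N.mkQL.continuous) (by rwa [hrange, hcomp])
  convert hclosed using 3 with y
  rw [hrange]
  exact ⟨fun ⟨x, hx⟩ => ⟨ℓ x, hx⟩, hS y⟩

theorem IsDFSLimit.isClosed_of_forall_isClosed_preimage {E : Type} [AddCommGroup E] [Module ℝ E]
    [TopologicalSpace E] {EJ : ℕ → Type} [∀ j, NormedAddCommGroup (EJ j)]
    [∀ j, NormedSpace ℝ (EJ j)] [∀ j, CompleteSpace (EJ j)]
    {link : ∀ j, EJ j →L[ℝ] EJ (j + 1)} {incl : ∀ j, EJ j →L[ℝ] E}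
    (hE : IsDFSLimit E EJ link incl) {s : Set E} (hs : ∀ j, IsClosed (incl j ⁻¹' s)) :
    IsClosed s := by
  obtain ⟨-, -, -, -, -, huniv⟩ := hE
  have hid := @huniv E _ _ (⨆ j, .coinduced (incl j) inferInstance) LinearMap.id
    fun j => continuous_iSup_rng continuous_coinduced_rng
  have hs' : @IsClosed E (⨆ j, .coinduced (incl j) inferInstance) s :=
    isClosed_iSup_iff.2 fun j => isClosed_coinduced.2 (hs j)
  exact @IsClosed.preimage E E _ (⨆ j, .coinduced (incl j) inferInstance) _ hid s hs'

theorem stmt12_general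
    (E Esharp F Fsharp : Type)
    [AddCommGroup E] [Module ℝ E] [TopologicalSpace E]
    [AddCommGroup Esharp] [Module ℝ Esharp] [TopologicalSpace Esharp]
    [AddCommGroup F] [Module ℝ F] [TopologicalSpace F]
    [AddCommGroup Fsharp] [Module ℝ Fsharp] [TopologicalSpace Fsharp]
    [T2Space Fsharp]
    (ESJ FJ : ℕ → Type)
    [∀ j, NormedAddCommGroup (ESJ j)] [∀ j, NormedSpace ℝ (ESJ j)]
    [∀ j, CompleteSpace (ESJ j)]
    [∀ j, NormedAddCommGroup (FJ j)] [∀ j, NormedSpace ℝ (FJ j)]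
    [∀ j, CompleteSpace (FJ j)]
    (linkES : ∀ j, ESJ j →L[ℝ] ESJ (j + 1)) (inclES : ∀ j, ESJ j →L[ℝ] Esharp)
    (linkF : ∀ j, FJ j →L[ℝ] FJ (j + 1)) (inclF : ∀ j, FJ j →L[ℝ] F)
    (hES : IsDFSLimit Esharp ESJ linkES inclES)
    (hF : IsDFSLimit F FJ linkF inclF)
    (iE : E →L[ℝ] Esharp)
    (jF : F →L[ℝ] Fsharp) (hjF : Function.Injective jF)
    -- E ↪ E♯₀ continuously:
    (e0 : E →L[ℝ] ESJ 0) (he0 : ∀ x : E, inclES 0 (e0 x) = iE x)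
    (T : Esharp →L[ℝ] Fsharp) (TE : E →L[ℝ] F)
    (hcomp : ∀ e : E, jF (TE e) = T (iE e))
    -- property (H):
    (hH : ∀ u : Esharp, T u ∈ Set.range jF → u ∈ Set.range iE) :
    IsClosed (Set.range TE) := by
  obtain ⟨-, hcompact, -, hlink, -, -⟩ := hES
  have hlink₀ : (T ∘L inclES 1) ∘L linkES 0 = T ∘L inclES 0 := by
    ext x
    exact congrArg T (hlink 0 x)
  refine hF.isClosed_of_forall_isClosed_preimage fun k => ?_
  have hpre : inclF k ⁻¹' range TE = {y | (jF ∘L inclF k) y ∈ range (T ∘L inclES 0)} := by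
    ext y
    refine ⟨fun ⟨e, he⟩ => ⟨e0 e, ?_⟩, fun ⟨u, hu⟩ => ?_⟩
    · simp only [ContinuousLinearMap.comp_apply, he0, ← hcomp, he]
    · obtain ⟨e, he⟩ := hH (inclES 0 u) ⟨inclF k y, hu.symm⟩
      exact ⟨e, hjF (by rw [hcomp, he]; exact hu)⟩
  rw [hpre, ← hlink₀]
  refine isClosed_setOf_mem_range_comp_of_isCompactOperator _ _ (hcompact 0) ?_
  rintro y ⟨u, hu⟩
  obtain ⟨e, he⟩ := hH (inclES 1 u) ⟨inclF k y, hu.symm⟩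
  rw [hlink₀]
  exact ⟨e0 e, by rw [ContinuousLinearMap.comp_apply, he0, he]; exact hu⟩

theorem stmt12
    (E Esharp F Fsharp : Type)
    [AddCommGroup E] [Module ℝ E] [TopologicalSpace E]
    [AddCommGroup Esharp] [Module ℝ Esharp] [TopologicalSpace Esharp]
    [AddCommGroup F] [Module ℝ F] [TopologicalSpace F]
    [AddCommGroup Fsharp] [Module ℝ Fsharp] [TopologicalSpace Fsharp]
    [T2Space Fsharp]
    (EJ ESJ FJ : ℕ → Type)
    [∀ j, NormedAddCommGroup (EJ j)] [∀ j, NormedSpace ℝ (EJ j)]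
    [∀ j, CompleteSpace (EJ j)]
    [∀ j, NormedAddCommGroup (ESJ j)] [∀ j, NormedSpace ℝ (ESJ j)]
    [∀ j, CompleteSpace (ESJ j)]
    [∀ j, NormedAddCommGroup (FJ j)] [∀ j, NormedSpace ℝ (FJ j)]
    [∀ j, CompleteSpace (FJ j)]
    (linkE : ∀ j, EJ j →L[ℝ] EJ (j + 1)) (inclE : ∀ j, EJ j →L[ℝ] E)
    (linkES : ∀ j, ESJ j →L[ℝ] ESJ (j + 1)) (inclES : ∀ j, ESJ j →L[ℝ] Esharp)
    (linkF : ∀ j, FJ j →L[ℝ] FJ (j + 1)) (inclF : ∀ j, FJ j →L[ℝ] F)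
    (hE : IsDFSLimit E EJ linkE inclE)
    (hES : IsDFSLimit Esharp ESJ linkES inclES)
    (hF : IsDFSLimit F FJ linkF inclF)
    (iE : E →L[ℝ] Esharp) (hiE : Function.Injective iE)
    (jF : F →L[ℝ] Fsharp) (hjF : Function.Injective jF)
    -- E ↪ E♯₀ continuously:
    (e0 : E →L[ℝ] ESJ 0) (he0 : ∀ x : E, inclES 0 (e0 x) = iE x)
    (T : Esharp →L[ℝ] Fsharp) (TE : E →L[ℝ] F)
    (hcomp : ∀ e : E, jF (TE e) = T (iE e))
    -- property (H):
    (hH : ∀ u : Esharp, T u ∈ Set.range jF → u ∈ Set.range iE) :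
    IsClosed (Set.range TE) :=
  stmt12_general E Esharp F Fsharp ESJ FJ linkES inclES linkF inclF hES hF iE jF hjF e0 he0 T TE
    hcomp hH
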